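/- Let K be an algebraically closed field and g > 1 an integer satisfying Condition (*). Let J ⊆ M(2g+1) be a g-element subset and let ε1, ε2 ∈ M(2g+1) be distinct, with η1 = η(ε1) and η2 = η(ε2). Then the polynomial in the variable b given by Ψ_{J,b}(η1)·Ψ_{∁J,b}(η2) − Ψ_{J,b}(η2)·Ψ_{∁J,b}(η1) has degree exactly 2g − 1 in b. -/

import Mathlib

open Polynomial Finset

/-- `Mset K n` is the set of `n`-th roots of unity in `K` other than `1`. -/
noncomputable def Mset (K : Type*) [Field K] (n : ℕ) : Finset K :=
  open scoped Classical in
  (Polynomial.nthRootsFinset n (1 : K)).filter (· ≠ 1)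

/-- `Ψ_{J,b}(c) = ∏_{ε ∈ J} (c + b·η(ε))`, with `η(ε) = 1/(ε-1)`, regarded as a
polynomial in the indeterminate `b` (named `X` here). -/
noncomputable def PsiB {K : Type*} [Field K] (J : Finset K) (c : K) : K[X] :=
  ∏ ε ∈ J, (C c + C ((ε - 1)⁻¹) * X)

/-!
Writing `Ψ_{s,b}(c) = (∏_{ε∈s} η(ε)) · ∏_{ε∈s} (b + c(ε-1))`, the two products in the difference
become monic of degree `2g` in `b`, so their leading terms cancel and the coefficient of `b^{2g-1}`
is `(η₁ - η₂)(∑_{J} ε - ∑_{∁J} ε)`. Since all of `M(2g+1)` sums to `-1`, the second factor is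
`2 ∑_{J} ε + 1`. In characteristic `0` it cannot vanish because `∑_{J} ε` is an algebraic integer
and `-1/2` is not. In characteristic `p` it is a `±1`-combination of `ζ, …, ζ^{2g}` for a primitive
root `ζ`; the minimal polynomial of `ζ` over `𝔽_p` has degree the order of `p` modulo `2g+1`, which
is `2g`, so no such combination vanishes.
-/

theorem Polynomial.Monic.degree_sub_eq_of_nextCoeff_ne {R : Type*} [Ring R] [Nontrivial R]
    {f g : R[X]} (hf : f.Monic) (hg : g.Monic) (hdeg : f.natDegree = g.natDegree)
    (hne : f.nextCoeff ≠ g.nextCoeff) :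
    (f - g).degree = ↑(f.natDegree - 1) := by
  have hpos : 0 < f.natDegree := by
    by_contra h0
    exact hne (by rw [nextCoeff_eq_zero.mpr (.inl (by omega)),
      nextCoeff_eq_zero.mpr (.inl (by omega))])
  have hcoeff : (f - g).coeff (f.natDegree - 1) ≠ 0 := by
    rwa [coeff_sub, ← nextCoeff_of_natDegree_pos hpos, hdeg,
      ← nextCoeff_of_natDegree_pos (hdeg ▸ hpos), sub_ne_zero]
  have hfg : f - g ≠ 0 := fun h => hcoeff (by rw [h, coeff_zero])
  have hlt : (f - g).natDegree < f.natDegree :=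
    natDegree_lt_natDegree hfg <| degree_sub_lt_left
      (by rw [degree_eq_natDegree hf.ne_zero, degree_eq_natDegree hg.ne_zero, hdeg])
      hf.ne_zero (by rw [hf.leadingCoeff, hg.leadingCoeff])
  exact degree_eq_of_le_of_coeff_ne_zero (degree_le_of_natDegree_le (by omega)) hcoeff

section PsiB

variable {K : Type*} [Field K]

noncomputable def PsiBMonic (s : Finset K) (c : K) : K[X] :=
  ∏ ε ∈ s, (X + C (c * (ε - 1)))

theorem PsiB_eq_C_mul_PsiBMonic {s : Finset K} (hs : 1 ∉ s) (c : K) :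
    PsiB s c = C (∏ ε ∈ s, (ε - 1)⁻¹) * PsiBMonic s c := by
  rw [PsiB, PsiBMonic, map_prod, ← prod_mul_distrib]
  refine prod_congr rfl fun ε hε => ?_
  have hε1 : ε - 1 ≠ 0 := sub_ne_zero.mpr (ne_of_mem_of_not_mem hε hs)
  rw [mul_add, ← C_mul, mul_comm c, inv_mul_cancel_left₀ hε1, add_comm]

theorem monic_PsiBMonic (s : Finset K) (c : K) : (PsiBMonic s c).Monic :=
  monic_prod_of_monic _ _ fun _ _ => monic_X_add_C _

theorem natDegree_PsiBMonic (s : Finset K) (c : K) : (PsiBMonic s c).natDegree = s.card := by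
  rw [PsiBMonic, natDegree_prod_of_monic _ _ fun _ _ => monic_X_add_C _]
  simp only [natDegree_X_add_C, sum_const, smul_eq_mul, mul_one]

theorem nextCoeff_PsiBMonic (s : Finset K) (c : K) :
    (PsiBMonic s c).nextCoeff = c * ∑ ε ∈ s, (ε - 1) := by
  rw [PsiBMonic, Monic.nextCoeff_prod _ _ fun _ _ => monic_X_add_C _, mul_sum]
  exact sum_congr rfl fun _ _ => nextCoeff_X_add_C _

theorem degree_PsiB_mul_sub_PsiB_mul {J L : Finset K} (hJ : 1 ∉ J) (hL : 1 ∉ L) {c₁ c₂ : K}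
    (hc : c₁ ≠ c₂) (hs : ∑ ε ∈ J, (ε - 1) ≠ ∑ ε ∈ L, (ε - 1)) :
    (PsiB J c₁ * PsiB L c₂ - PsiB J c₂ * PsiB L c₁).degree = ↑(J.card + L.card - 1) := by
  have hprod {s : Finset K} (hs : 1 ∉ s) : ∏ ε ∈ s, (ε - 1)⁻¹ ≠ 0 :=
    prod_ne_zero_iff.mpr fun ε hε => inv_ne_zero (sub_ne_zero.mpr (ne_of_mem_of_not_mem hε hs))
  have hmonic (c c' : K) : (PsiBMonic J c * PsiBMonic L c').Monic :=
    (monic_PsiBMonic _ _).mul (monic_PsiBMonic _ _)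
  have hfactor : PsiB J c₁ * PsiB L c₂ - PsiB J c₂ * PsiB L c₁ =
      C ((∏ ε ∈ J, (ε - 1)⁻¹) * ∏ ε ∈ L, (ε - 1)⁻¹) *
        (PsiBMonic J c₁ * PsiBMonic L c₂ - PsiBMonic J c₂ * PsiBMonic L c₁) := by
    simp only [PsiB_eq_C_mul_PsiBMonic hJ, PsiB_eq_C_mul_PsiBMonic hL, C_mul]
    ring
  rw [hfactor, degree_C_mul (mul_ne_zero (hprod hJ) (hprod hL)),
    (hmonic c₁ c₂).degree_sub_eq_of_nextCoeff_ne (hmonic c₂ c₁)]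
  · rw [(monic_PsiBMonic _ _).natDegree_mul (monic_PsiBMonic _ _), natDegree_PsiBMonic,
      natDegree_PsiBMonic]
  · simp only [(monic_PsiBMonic _ _).natDegree_mul (monic_PsiBMonic _ _), natDegree_PsiBMonic]
  · rw [(monic_PsiBMonic _ _).nextCoeff_mul (monic_PsiBMonic _ _),
      (monic_PsiBMonic _ _).nextCoeff_mul (monic_PsiBMonic _ _), nextCoeff_PsiBMonic,
      nextCoeff_PsiBMonic, nextCoeff_PsiBMonic, nextCoeff_PsiBMonic]
    intro h
    exact mul_ne_zero (sub_ne_zero.mpr hc) (sub_ne_zero.mpr hs) (by linear_combination h)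

end PsiB

section Mset

variable {K : Type*} [Field K] {n : ℕ} {ζ : K}

theorem mem_Mset [NeZero n] {x : K} : x ∈ Mset K n ↔ x ^ n = 1 ∧ x ≠ 1 := by
  simp [Mset, mem_nthRootsFinset (NeZero.pos n)]

theorem one_notMem_Mset : 1 ∉ Mset K n := by
  simp [Mset]

theorem Mset_eq_image [DecidableEq K] [NeZero n] (hζ : IsPrimitiveRoot ζ n) :
    Mset K n = (range (n - 1)).image (fun i => ζ ^ (i + 1)) := by
  ext x
  simp only [mem_Mset, mem_image, mem_range]
  constructor
  · rintro ⟨hxn, hx1⟩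
    obtain ⟨i, hi, rfl⟩ := hζ.eq_pow_of_pow_eq_one hxn
    cases i with
    | zero => exact absurd (pow_zero ζ) hx1
    | succ j => exact ⟨j, by omega, rfl⟩
  · rintro ⟨i, hi, rfl⟩
    exact ⟨by rw [← pow_mul, mul_comm, pow_mul, hζ.pow_eq_one, one_pow],
      hζ.pow_ne_one_of_pos_of_lt (by omega) (by omega)⟩

theorem sum_Mset_eq_sum_range [NeZero n] {M : Type*} [AddCommMonoid M]
    (hζ : IsPrimitiveRoot ζ n) (f : K → M) :
    ∑ x ∈ Mset K n, f x = ∑ i ∈ range (n - 1), f (ζ ^ (i + 1)) := by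
  classical
  rw [Mset_eq_image hζ, sum_image]
  intro i hi j hj h
  simp only [coe_range, Set.mem_Iio] at hi hj
  have := hζ.pow_inj (by omega) (by omega) h
  omega

theorem card_Mset [NeZero n] (hζ : IsPrimitiveRoot ζ n) : (Mset K n).card = n - 1 := by
  simpa using sum_Mset_eq_sum_range hζ fun _ => (1 : ℕ)

theorem sum_Mset (hζ : IsPrimitiveRoot ζ n) (hn : 1 < n) : ∑ x ∈ Mset K n, x = -1 := by
  have : NeZero n := ⟨by omega⟩
  have h := hζ.geom_sum_eq_zero hn
  rw [← Nat.sub_add_cancel hn.le, sum_range_succ', pow_zero] at h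
  rw [sum_Mset_eq_sum_range hζ fun x => x]
  linear_combination h

end Mset

theorem sum_ite_mem_eq_sum_sub_sum_sdiff {α G : Type*} [DecidableEq α] [AddCommGroup G]
    {s t : Finset α} (h : t ⊆ s) (f : α → G) :
    ∑ x ∈ s, (if x ∈ t then f x else -f x) = ∑ x ∈ t, f x - ∑ x ∈ s \ t, f x := by
  rw [sum_ite, sum_neg_distrib, filter_mem_eq_inter, inter_eq_right.mpr h,
    filter_notMem_eq_sdiff, sub_eq_add_neg]

theorem two_mul_add_one_ne_zero_of_isIntegral {K : Type*} [Field K] [CharZero K] {T : K}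
    (hT : IsIntegral ℤ T) : 2 * T + 1 ≠ 0 := by
  intro h
  have hT2 : T = algebraMap ℚ K (-1 / 2) := by
    rw [eq_ratCast]
    push_cast
    linear_combination h / 2
  rw [hT2, isIntegral_algebraMap_iff (algebraMap ℚ K).injective] at hT
  obtain ⟨y, hy⟩ := IsIntegrallyClosed.isIntegral_iff.mp hT
  have : (2 * y : ℚ) = -1 := by rw [algebraMap_int_eq, eq_intCast] at hy; rw [hy]; norm_num
  have : 2 * y = -1 := by exact_mod_cast this
  omega

section SumNeSumSdiff

variable {K : Type*} [Field K] {n : ℕ} {ζ : K}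

theorem sum_ne_sum_sdiff_Mset_of_charZero [DecidableEq K] [CharZero K]
    (hζ : IsPrimitiveRoot ζ n) (hn : 1 < n) {J : Finset K} (hJ : J ⊆ Mset K n) :
    ∑ ε ∈ J, ε ≠ ∑ ε ∈ Mset K n \ J, ε := by
  have : NeZero n := ⟨by omega⟩
  have hint : IsIntegral ℤ (∑ ε ∈ J, ε) := IsIntegral.sum _ fun ε hε =>
    IsIntegral.of_pow (NeZero.pos n) (by rw [(mem_Mset.mp (hJ hε)).1]; exact isIntegral_one)
  have htotal : ∑ ε ∈ J, ε + ∑ ε ∈ Mset K n \ J, ε = -1 := by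
    rw [add_comm, sum_sdiff hJ, sum_Mset hζ hn]
  intro h
  exact two_mul_add_one_ne_zero_of_isIntegral hint (by linear_combination h + htotal)

theorem IsPrimitiveRoot.natDegree_minpoly_zmod {p : ℕ} [Fact p.Prime] [Algebra (ZMod p) K]
    [NeZero n] (hζ : IsPrimitiveRoot ζ n) :
    (minpoly (ZMod p) ζ).natDegree = orderOf (p : ZMod n) := by
  have : CharP K p := (Algebra.charP_iff (ZMod p) K p).mp inferInstance
  have : NeZero (n : K) := hζ.neZero'
  have hpn : p.Coprime n := (Nat.Prime.coprime_iff_not_dvd Fact.out).mpr fun h =>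
    NeZero.ne (n : K) ((CharP.cast_eq_zero_iff K p n).mpr h)
  have hint : IsIntegral (ZMod p) ζ :=
    IsIntegral.of_pow (NeZero.pos n) (by rw [hζ.pow_eq_one]; exact isIntegral_one)
  have hdvd : minpoly (ZMod p) ζ ∣ cyclotomic n (ZMod p) := by
    refine minpoly.dvd _ _ ?_
    rw [aeval_def, eval₂_eq_eval_map, map_cyclotomic]
    exact hζ.isRoot_cyclotomic (NeZero.pos n)
  rw [natDegree_of_dvd_cyclotomic_of_irreducible (f := 1) (by simp) hpn hdvd
    (minpoly.irreducible hint), ← orderOf_units]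
  simp

theorem sum_ne_sum_sdiff_Mset_of_orderOf_eq [DecidableEq K] {p : ℕ} [Fact p.Prime]
    [Algebra (ZMod p) K] [NeZero n] (hζ : IsPrimitiveRoot ζ n) (hord : orderOf (p : ZMod n) = n - 1)
    {J : Finset K} (hJ : J ⊆ Mset K n) :
    ∑ ε ∈ J, ε ≠ ∑ ε ∈ Mset K n \ J, ε := by
  have hn : 0 < n - 1 := by
    by_contra! h
    obtain rfl : n = 1 := by have := NeZero.pos n; omega
    rw [Subsingleton.elim (p : ZMod 1) 1, orderOf_one] at hord
    omega
  set s : ℕ → ZMod p := fun i => if ζ ^ (i + 1) ∈ J then 1 else -1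
  set f : (ZMod p)[X] := ∑ i ∈ range (n - 1), monomial i (s i)
  have hs (i : ℕ) : s i ≠ 0 := by
    simp only [s]
    split_ifs <;> simp
  have hf : f ≠ 0 := fun h0 => hs 0 <| by
    simpa [f, finsetSum_coeff, coeff_monomial, hn] using congrArg (coeff · 0) h0
  have hfdeg : f.natDegree < (minpoly (ZMod p) ζ).natDegree := by
    rw [hζ.natDegree_minpoly_zmod, hord]
    refine (natDegree_sum_le_of_forall_le _ _ fun i hi => ?_).trans_lt (Nat.sub_one_lt_of_lt hn)
    exact (natDegree_monomial_le _).trans (by simp at hi; omega)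
  have hfζ : ζ * aeval ζ f = ∑ ε ∈ J, ε - ∑ ε ∈ Mset K n \ J, ε := by
    rw [← sum_ite_mem_eq_sum_sub_sum_sdiff hJ, sum_Mset_eq_sum_range hζ, map_sum, mul_sum]
    refine sum_congr rfl fun i _ => ?_
    simp only [s, aeval_monomial, pow_succ']
    split_ifs <;> simp
  intro h
  have hroot : aeval ζ f = 0 := by
    have hζ0 : ζ ≠ 0 := hζ.ne_zero (NeZero.ne n)
    simpa [hζ0, h] using hfζ
  exact hfdeg.not_ge (natDegree_le_natDegree (minpoly.degree_le_of_ne_zero _ _ hf hroot))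

end SumNeSumSdiff

theorem stmt_13_general (K : Type*) [Field K] [IsAlgClosed K] [DecidableEq K]
    (g : ℕ) (hg : 1 < g)
    (hchar : ((2 * (2 * g + 1) : ℕ) : K) ≠ 0)
    (hstar : ringChar K = 0 ∨
      (Nat.Prime (2 * g + 1) ∧ (ringChar K).Prime ∧ ringChar K ≠ 2 ∧
        orderOf ((ringChar K : ℕ) : ZMod (2 * g + 1)) = 2 * g))
    (J : Finset K) (hJ : J ⊆ Mset K (2 * g + 1)) (hJcard : J.card = g)
    (ε1 ε2 : K)
    (h12 : ε1 ≠ ε2) :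
    (PsiB J ((ε1 - 1)⁻¹) * PsiB (Mset K (2 * g + 1) \ J) ((ε2 - 1)⁻¹) -
      PsiB J ((ε2 - 1)⁻¹) * PsiB (Mset K (2 * g + 1) \ J) ((ε1 - 1)⁻¹)).degree
      = (2 * g - 1 : ℕ) := by
  have : NeZero ((2 * g + 1 : ℕ) : K) := ⟨fun h => hchar (by rw [Nat.cast_mul, h, mul_zero])⟩
  obtain ⟨ζ, hζ⟩ := HasEnoughRootsOfUnity.exists_primitiveRoot K (2 * g + 1)
  have hsum : ∑ ε ∈ J, ε ≠ ∑ ε ∈ Mset K (2 * g + 1) \ J, ε := by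
    rcases hstar with hchar0 | ⟨-, hp, -, hord⟩
    · have : CharZero K := (CharP.ringChar_zero_iff_CharZero (R := K)).mp hchar0
      exact sum_ne_sum_sdiff_Mset_of_charZero hζ (by omega) hJ
    · have : Fact (ringChar K).Prime := ⟨hp⟩
      let := ZMod.algebra K (ringChar K)
      exact sum_ne_sum_sdiff_Mset_of_orderOf_eq hζ hord hJ
  have hcard : (Mset K (2 * g + 1) \ J).card = g := by
    rw [card_sdiff_of_subset hJ, card_Mset hζ, hJcard]
    omega
  have hs : ∑ ε ∈ J, (ε - 1) ≠ ∑ ε ∈ Mset K (2 * g + 1) \ J, (ε - 1) := by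
    simpa [sum_sub_distrib, hJcard, hcard] using hsum
  rw [degree_PsiB_mul_sub_PsiB_mul (fun h => one_notMem_Mset (hJ h))
    (fun h => one_notMem_Mset (sdiff_subset h)) (by simpa using h12) hs, hJcard, hcard, two_mul]

theorem stmt_13 (K : Type*) [Field K] [IsAlgClosed K] [DecidableEq K]
    (g : ℕ) (hg : 1 < g)
    (hchar : ((2 * (2 * g + 1) : ℕ) : K) ≠ 0)
    (hstar : ringChar K = 0 ∨
      (Nat.Prime (2 * g + 1) ∧ (ringChar K).Prime ∧ ringChar K ≠ 2 ∧
        orderOf ((ringChar K : ℕ) : ZMod (2 * g + 1)) = 2 * g))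
    (J : Finset K) (hJ : J ⊆ Mset K (2 * g + 1)) (hJcard : J.card = g)
    (ε1 ε2 : K) (h1 : ε1 ∈ Mset K (2 * g + 1)) (h2 : ε2 ∈ Mset K (2 * g + 1))
    (h12 : ε1 ≠ ε2) :
    (PsiB J ((ε1 - 1)⁻¹) * PsiB (Mset K (2 * g + 1) \ J) ((ε2 - 1)⁻¹) -
      PsiB J ((ε2 - 1)⁻¹) * PsiB (Mset K (2 * g + 1) \ J) ((ε1 - 1)⁻¹)).degree
      = (2 * g - 1 : ℕ) :=
  stmt_13_general K g hg hchar hstar J hJ hJcard ε1 ε2 h12
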